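/- arXiv:2504.00197 — 3 statements merged into one kernel-verified Lean document; each statement's English description precedes it below -/
import Mathlib

section
/- Let X = (x_1,...,x_n) and X' = (x'_1,...,x'_n) be finite tuples of vectors in ℝ³, and suppose that for all indices i, j, k, l, m, n the wedge signs sign(⟨(x_i × x_j) × (x_k × x_l), x_m × x_n⟩) coincide with sign(⟨(x'_i × x'_j) × (x'_k × x'_l), x'_m × x'_n⟩). Then either det(x_i, x_j, x_k) and det(x'_i, x'_j, x'_k) have the same sign for all i, j, k, or they have opposite signs for all i, j, k. -/
open Matrix

noncomputable def det3 (x y z : Fin 3 → ℝ) : ℝ := Matrix.det (Matrix.of ![x, y, z])ᵀ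

lemma det3_expand (x y z : Fin 3 → ℝ) :
    det3 x y z = x 0 * (y 1 * z 2) - x 0 * (y 2 * z 1) - x 1 * (y 0 * z 2)
      + x 1 * (y 2 * z 0) + x 2 * (y 0 * z 1) - x 2 * (y 1 * z 0) := by
  simp [det3, Matrix.det_fin_three, Matrix.transpose, Matrix.vecHead, Matrix.vecTail]
  ring

lemma wedge_eq (a b c d e : Fin 3 → ℝ) :
    (crossProduct (crossProduct a b) (crossProduct c d)) ⬝ᵥ (crossProduct d e)
      = det3 a b d * det3 c d e := by
  simp [cross_apply, det3_expand, dotProduct, Fin.sum_univ_three]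
  ring

lemma sgn_mul (a b : ℝ) : Real.sign (a * b) = Real.sign a * Real.sign b := by
  rcases lt_trichotomy a 0 with ha | ha | ha <;>
    rcases lt_trichotomy b 0 with hb | hb | hb <;>
    simp_all [Real.sign_of_pos, Real.sign_of_neg, Real.sign_zero,
      mul_pos_of_neg_of_neg, mul_pos, mul_neg_of_neg_of_pos, mul_neg_of_pos_of_neg]

lemma det3_cyclic (x y z : Fin 3 → ℝ) : det3 x y z = det3 z x y := by
  simp [det3_expand]; ring

lemma cramer3 (a b c i j k : Fin 3 → ℝ) :
    det3 a b c * det3 i j k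
      = det3 i j a * det3 k b c + det3 i j b * det3 a k c + det3 i j c * det3 a b k := by
  simp [det3_expand]; ring

lemma sign_sq_one {r : ℝ} (hr : r ≠ 0) : Real.sign r * Real.sign r = 1 := by
  rcases lt_trichotomy r 0 with h | h | h <;>
    simp_all [Real.sign_of_pos, Real.sign_of_neg]

theorem wedge_determines_chirotope_up_to_sign {n : ℕ} (X X' : Fin n → Fin 3 → ℝ)
    (h : ∀ i j k l m p : Fin n,
      Real.sign ((crossProduct (crossProduct (X i) (X j)) (crossProduct (X k) (X l))) ⬝ᵥ
          (crossProduct (X m) (X p)))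
        = Real.sign ((crossProduct (crossProduct (X' i) (X' j)) (crossProduct (X' k) (X' l))) ⬝ᵥ
          (crossProduct (X' m) (X' p)))) :
    (∀ i j k : Fin n, Real.sign (det3 (X i) (X j) (X k)) = Real.sign (det3 (X' i) (X' j) (X' k)))
    ∨ (∀ i j k : Fin n, Real.sign (det3 (X i) (X j) (X k)) = - Real.sign (det3 (X' i) (X' j) (X' k))) := by
  set S : Fin n → Fin n → Fin n → ℝ :=
    fun i j k => Real.sign (det3 (X i) (X j) (X k)) with hS
  set S' : Fin n → Fin n → Fin n → ℝ :=
    fun i j k => Real.sign (det3 (X' i) (X' j) (X' k)) with hS'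
  have key : ∀ i j k l p : Fin n, S i j l * S k l p = S' i j l * S' k l p := by
    intro i j k l p
    have := h i j k l l p
    rwa [wedge_eq, wedge_eq, sgn_mul, sgn_mul] at this
  have scyc : ∀ i j k : Fin n, S i j k = S k i j := fun i j k =>
    congrArg Real.sign (det3_cyclic (X i) (X j) (X k))
  have scyc' : ∀ i j k : Fin n, S' i j k = S' k i j := fun i j k =>
    congrArg Real.sign (det3_cyclic (X' i) (X' j) (X' k))
  -- key2: second triple starts with shared index
  have key2 : ∀ a b c d e : Fin n, S a b c * S c d e = S' a b c * S' c d e := by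
    intro a b c d e
    have := key a b e c d
    rwa [show S e c d = S c d e from (scyc c d e).symm,
      show S' e c d = S' c d e from (scyc' c d e).symm] at this
  have ssq : ∀ i j k : Fin n, S i j k * S i j k = S' i j k * S' i j k := by
    intro i j k
    have := key2 i j k i j
    rwa [← scyc i j k, ← scyc' i j k] at this
  have zero_tr : ∀ i j k : Fin n, S i j k = 0 → S' i j k = 0 := by
    intro i j k h0
    have := ssq i j k
    rw [h0, mul_zero] at this
    exact mul_self_eq_zero.mp this.symm
  by_cases hall : ∀ i j k : Fin n, S i j k = 0
  · left
    intro i j k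
    show S i j k = S' i j k
    rw [hall i j k, zero_tr i j k (hall i j k)]
  · push_neg at hall
    obtain ⟨a, b, c, hA⟩ := hall
    -- main bridging lemma
    have main : ∀ i j k : Fin n, S a b c * S i j k = S' a b c * S' i j k := by
      intro i j k
      by_cases h0 : S i j k = 0
      · rw [h0, zero_tr i j k h0, mul_zero, mul_zero]
      · -- both dets nonzero
        have hdT : det3 (X i) (X j) (X k) ≠ 0 := fun hz => h0 (by simp [hS, hz])
        have hdA : det3 (X a) (X b) (X c) ≠ 0 := fun hz => hA (by simp [hS, hz])
        -- find a bridge m ∈ {a,b,c} with det3 (X i) (X j) (X m) ≠ 0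
        have hbr : det3 (X i) (X j) (X a) ≠ 0 ∨ det3 (X i) (X j) (X b) ≠ 0 ∨
            det3 (X i) (X j) (X c) ≠ 0 := by
          by_contra hc
          push_neg at hc
          obtain ⟨h1, h2, h3⟩ := hc
          have := cramer3 (X a) (X b) (X c) (X i) (X j) (X k)
          rw [h1, h2, h3] at this
          simp at this
          rcases this with h' | h'
          · exact hdA h'
          · exact hdT h'
        -- generic argument given bridge index m and cyclic-perm of (a,b,c) starting at m
        have gen : ∀ m β γ : Fin n, S m β γ = S a b c → S' m β γ = S' a b c →
            det3 (X i) (X j) (X m) ≠ 0 → S a b c * S i j k = S' a b c * S' i j k := by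
          intro m β γ hp hp' hm
          have hV : S i j m ≠ 0 := fun hz => hm (Real.sign_eq_zero_iff.mp hz)
          have e1 : S i j k * S i j m = S' i j k * S' i j m := by
            have := key2 j k i j m
            rwa [show S j k i = S i j k by rw [scyc i j k, scyc k i j],
              show S' j k i = S' i j k by rw [scyc' i j k, scyc' k i j]] at this
          have e2 : S i j m * S a b c = S' i j m * S' a b c := by
            have := key2 i j m β γ
            rwa [hp, hp'] at this
          have e3 : S i j m * S i j m = 1 := sign_sq_one hm
          have e4 : S' i j m * S' i j m = 1 := by rw [← ssq i j m]; exact e3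
          have e5 : (S i j k * S i j m) * (S i j m * S a b c)
              = (S' i j k * S' i j m) * (S' i j m * S' a b c) := by rw [e1, e2]
          linear_combination e5 - (S a b c * S i j k) * e3 + (S' a b c * S' i j k) * e4
        rcases hbr with hm | hm | hm
        · exact gen a b c rfl rfl hm
        · exact gen b c a (by rw [scyc a b c, scyc c a b]) (by rw [scyc' a b c, scyc' c a b]) hm
        · exact gen c a b (scyc a b c).symm (scyc' a b c).symm hm
    have hA' : S' a b c ≠ 0 := fun hz => hA (by
      have := ssq a b c
      rw [hz, mul_zero] at this
      exact mul_self_eq_zero.mp this)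
    rcases mul_self_eq_mul_self_iff.mp (ssq a b c) with he | he
    · left
      intro i j k
      have := main i j k
      rw [he] at this
      exact mul_left_cancel₀ hA' this
    · right
      intro i j k
      have := main i j k
      rw [he, neg_mul, ← mul_neg] at this
      have := mul_left_cancel₀ hA' this.symm
      linarith
end

section
/- Let φ : ℝ³ → ℝ³ be a linear isomorphism with det φ > 0. Then for all vectors a₁, b₁, a₂, b₂, a₃, b₃ in ℝ³, sign(det(φ(a₁) × φ(b₁), φ(a₂) × φ(b₂), φ(a₃) × φ(b₃))) = sign(det(a₁ × b₁, a₂ × b₂, a₃ × b₃)). -/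
open Matrix

lemma cross_mulVec_key (M : Matrix (Fin 3) (Fin 3) ℝ) (a b : Fin 3 → ℝ) :
    Mᵀ *ᵥ (crossProduct (M *ᵥ a) (M *ᵥ b)) = M.det • crossProduct a b := by
  funext i
  fin_cases i <;>
    simp [crossProduct, Matrix.mulVec, Matrix.det_fin_three, Fin.sum_univ_three,
      Matrix.transpose_apply, dotProduct] <;> ring

lemma det3_mulVec (A : Matrix (Fin 3) (Fin 3) ℝ) (x y z : Fin 3 → ℝ) :
    det3 (A *ᵥ x) (A *ᵥ y) (A *ᵥ z) = A.det * det3 x y z := by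
  have h : (Matrix.of ![A *ᵥ x, A *ᵥ y, A *ᵥ z])ᵀ = A * (Matrix.of ![x, y, z])ᵀ := by
    ext i j
    fin_cases j <;>
      simp [Matrix.mul_apply, Matrix.mulVec, dotProduct, Fin.sum_univ_three,
        Matrix.vecHead, Matrix.vecTail, Matrix.transpose_apply, Function.comp]
  rw [det3, h, Matrix.det_mul, det3]

lemma det3_smul (r : ℝ) (x y z : Fin 3 → ℝ) :
    det3 (r • x) (r • y) (r • z) = r ^ 3 * det3 x y z := by
  have h : (Matrix.of ![r • x, r • y, r • z])ᵀ = r • (Matrix.of ![x, y, z])ᵀ := by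
    ext i j
    fin_cases j <;>
      simp [Matrix.vecHead, Matrix.vecTail, Matrix.transpose_apply, Function.comp]
  rw [det3, h, Matrix.det_smul, det3]
  norm_num

theorem positive_isomorphism_preserves_wedge_sign
    (φ : (Fin 3 → ℝ) ≃ₗ[ℝ] (Fin 3 → ℝ))
    (hφ : 0 < LinearMap.det (φ : (Fin 3 → ℝ) →ₗ[ℝ] (Fin 3 → ℝ)))
    (a₁ b₁ a₂ b₂ a₃ b₃ : Fin 3 → ℝ) :
    Real.sign (det3 (crossProduct (φ a₁) (φ b₁)) (crossProduct (φ a₂) (φ b₂))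
        (crossProduct (φ a₃) (φ b₃)))
      = Real.sign (det3 (crossProduct a₁ b₁) (crossProduct a₂ b₂) (crossProduct a₃ b₃)) := by
  set M := LinearMap.toMatrix' (φ : (Fin 3 → ℝ) →ₗ[ℝ] (Fin 3 → ℝ)) with hM
  have hφM : ∀ x, φ x = M *ᵥ x := by
    intro x
    have h : Matrix.toLin' M x = M *ᵥ x := Matrix.toLin'_apply M x
    rw [hM, Matrix.toLin'_toMatrix'] at h
    exact h.symm ▸ rfl
  have hdet : LinearMap.det (φ : (Fin 3 → ℝ) →ₗ[ℝ] (Fin 3 → ℝ)) = M.det := by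
    rw [hM, LinearMap.det_toMatrix']
  have hd : 0 < M.det := hdet ▸ hφ
  set c₁ := crossProduct a₁ b₁
  set c₂ := crossProduct a₂ b₂
  set c₃ := crossProduct a₃ b₃
  set c₁' := crossProduct (φ a₁) (φ b₁)
  set c₂' := crossProduct (φ a₂) (φ b₂)
  set c₃' := crossProduct (φ a₃) (φ b₃)
  have h1 : Mᵀ *ᵥ c₁' = M.det • c₁ := by
    simp only [c₁', c₁, hφM]; exact cross_mulVec_key M a₁ b₁
  have h2 : Mᵀ *ᵥ c₂' = M.det • c₂ := by
    simp only [c₂', c₂, hφM]; exact cross_mulVec_key M a₂ b₂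
  have h3 : Mᵀ *ᵥ c₃' = M.det • c₃ := by
    simp only [c₃', c₃, hφM]; exact cross_mulVec_key M a₃ b₃
  have key : M.det * det3 c₁' c₂' c₃' = M.det ^ 3 * det3 c₁ c₂ c₃ := by
    have := det3_mulVec Mᵀ c₁' c₂' c₃'
    rw [h1, h2, h3, det3_smul, Matrix.det_transpose] at this
    linarith [this]
  have hmain : det3 c₁' c₂' c₃' = M.det ^ 2 * det3 c₁ c₂ c₃ := by
    have hne : M.det ≠ 0 := ne_of_gt hd
    field_simp at key
    nlinarith [key, sq_nonneg M.det]
  rw [hmain]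
  rcases lt_trichotomy (det3 c₁ c₂ c₃) 0 with h | h | h
  · rw [Real.sign_of_neg h, Real.sign_of_neg (mul_neg_of_pos_of_neg (pow_pos hd 2) h)]
  · rw [h, mul_zero]
  · rw [Real.sign_of_pos h, Real.sign_of_pos (mul_pos (pow_pos hd 2) h)]
end

section
/- For vectors x, a, b, c in ℝ⁴, writing χ(u,v,w,z) = sign(det(u,v,w,z)) and letting α(u,v,w) denote the generalized cross product in ℝ⁴ (the unique vector with ⟨α(u,v,w), z⟩ = det(u,v,w,z) for all z), we have sign(det(α(x,a,b), α(x,a,c), α(x,b,c), α(a,b,c))) = sign(det(x,a,b,c)). -/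
open Matrix

noncomputable def det4 (a b c d : Fin 4 → ℝ) : ℝ := Matrix.det (Matrix.of ![a, b, c, d])ᵀ

/-- The generalized cross product in `ℝ⁴`: the unique vector with
`⟨alpha4 u v w, z⟩ = det(u,v,w,z)` for all `z`. -/
noncomputable def alpha4 (u v w : Fin 4 → ℝ) : Fin 4 → ℝ :=
  fun i => det4 u v w (Pi.single i 1)

lemma det_fin_four' (A : Matrix (Fin 4) (Fin 4) ℝ) :
    A.det =
      A 0 0 * (A 1 1 * (A 2 2 * A 3 3 - A 2 3 * A 3 2) - A 1 2 * (A 2 1 * A 3 3 - A 2 3 * A 3 1) +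
        A 1 3 * (A 2 1 * A 3 2 - A 2 2 * A 3 1)) -
      A 0 1 * (A 1 0 * (A 2 2 * A 3 3 - A 2 3 * A 3 2) - A 1 2 * (A 2 0 * A 3 3 - A 2 3 * A 3 0) +
        A 1 3 * (A 2 0 * A 3 2 - A 2 2 * A 3 0)) +
      A 0 2 * (A 1 0 * (A 2 1 * A 3 3 - A 2 3 * A 3 1) - A 1 1 * (A 2 0 * A 3 3 - A 2 3 * A 3 0) +
        A 1 3 * (A 2 0 * A 3 1 - A 2 1 * A 3 0)) -
      A 0 3 * (A 1 0 * (A 2 1 * A 3 2 - A 2 2 * A 3 1) - A 1 1 * (A 2 0 * A 3 2 - A 2 2 * A 3 0) +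
        A 1 2 * (A 2 0 * A 3 1 - A 2 1 * A 3 0)) := by
  rw [Matrix.det_succ_row_zero]
  simp [Fin.sum_univ_succ, Matrix.det_fin_three, Matrix.submatrix, Fin.succAbove,
    show (Fin.succ 2 : Fin 4) = 3 from rfl, show (Fin.castSucc 2 : Fin 4) = 2 from rfl,
    show (Fin.castSucc 1 : Fin 4) = 1 from rfl, show (Fin.castSucc 0 : Fin 4) = 0 from rfl]
  ring

lemma det4_expand (a b c d : Fin 4 → ℝ) :
    det4 a b c d =
      a 0 * (b 1 * (c 2 * d 3 - c 3 * d 2) - b 2 * (c 1 * d 3 - c 3 * d 1) +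
        b 3 * (c 1 * d 2 - c 2 * d 1)) -
      a 1 * (b 0 * (c 2 * d 3 - c 3 * d 2) - b 2 * (c 0 * d 3 - c 3 * d 0) +
        b 3 * (c 0 * d 2 - c 2 * d 0)) +
      a 2 * (b 0 * (c 1 * d 3 - c 3 * d 1) - b 1 * (c 0 * d 3 - c 3 * d 0) +
        b 3 * (c 0 * d 1 - c 1 * d 0)) -
      a 3 * (b 0 * (c 1 * d 2 - c 2 * d 1) - b 1 * (c 0 * d 2 - c 2 * d 0) +
        b 2 * (c 0 * d 1 - c 1 * d 0)) := by
  rw [det4, Matrix.det_transpose, det_fin_four']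
  simp

lemma updateRow_det (x a b c v : Fin 4 → ℝ) :
    ((Matrix.of ![x, a, b, c]).updateRow 0 v).det = det4 v a b c ∧
    ((Matrix.of ![x, a, b, c]).updateRow 1 v).det = det4 x v b c ∧
    ((Matrix.of ![x, a, b, c]).updateRow 2 v).det = det4 x a v c ∧
    ((Matrix.of ![x, a, b, c]).updateRow 3 v).det = det4 x a b v := by
  refine ⟨?_, ?_, ?_, ?_⟩ <;>
  · rw [det4_expand, det_fin_four']
    simp [Matrix.updateRow_apply]

lemma key (x a b c : Fin 4 → ℝ) :
    det4 (alpha4 x a b) (alpha4 x a c) (alpha4 x b c) (alpha4 a b c)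
      = (det4 x a b c) ^ 3 := by
  set M := Matrix.of ![x, a, b, c] with hM
  have e1 : ∀ i, alpha4 x a b i = M.adjugate i 3 := by
    intro i
    rw [Matrix.adjugate_apply, (updateRow_det x a b c (Pi.single i 1)).2.2.2]
    rfl
  have e2 : ∀ i, alpha4 x a c i = -M.adjugate i 2 := by
    intro i
    rw [Matrix.adjugate_apply, (updateRow_det x a b c (Pi.single i 1)).2.2.1]
    show det4 x a c (Pi.single i 1) = -det4 x a (Pi.single i 1) c
    rw [det4_expand, det4_expand]; ring
  have e3 : ∀ i, alpha4 x b c i = M.adjugate i 1 := by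
    intro i
    rw [Matrix.adjugate_apply, (updateRow_det x a b c (Pi.single i 1)).2.1]
    show det4 x b c (Pi.single i 1) = det4 x (Pi.single i 1) b c
    rw [det4_expand, det4_expand]; ring
  have e4 : ∀ i, alpha4 a b c i = -M.adjugate i 0 := by
    intro i
    rw [Matrix.adjugate_apply, (updateRow_det x a b c (Pi.single i 1)).1]
    show det4 a b c (Pi.single i 1) = -det4 (Pi.single i 1) a b c
    rw [det4_expand, det4_expand]; ring
  have hdet : det4 (alpha4 x a b) (alpha4 x a c) (alpha4 x b c) (alpha4 a b c)
      = (M.adjugate).det := by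
    rw [det4_expand, det_fin_four' M.adjugate]
    simp only [e1, e2, e3, e4]
    ring
  have hM4 : det4 x a b c = M.det := by
    rw [det4, Matrix.det_transpose]
  rw [hdet, Matrix.det_adjugate, hM4]
  norm_num

lemma sign_pow3 (d : ℝ) : Real.sign (d ^ 3) = Real.sign d := by
  rcases lt_trichotomy d 0 with hlt | heq | hgt
  · rw [Real.sign_of_neg hlt, Real.sign_of_neg (Odd.pow_neg ⟨1, by norm_num⟩ hlt)]
  · simp [heq]
  · rw [Real.sign_of_pos hgt, Real.sign_of_pos (by positivity)]

theorem wedge_det4_eq (x a b c : Fin 4 → ℝ) :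
    Real.sign (det4 (alpha4 x a b) (alpha4 x a c) (alpha4 x b c) (alpha4 a b c))
      = Real.sign (det4 x a b c) := by
  rw [key, sign_pow3]
end
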